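/- arXiv:2211.01063 — 3 statements merged into one kernel-verified Lean document; each statement's English description precedes it below -/
import Mathlib

section
/- Let y = (y_1,…,y_n) be a list of n positive integers, x = (x_1,…,x_n) a preference list, and k = min_{i∈[n]} y_i. If there exists an index i ∈ {1,…,n} with 1 < x_i ≤ k, then x is not an invariant parking assortment for y. -/
open Classical in
/-- One car attempts to park on a one-way street with spots `1, …, m`: given the set
`occ` of occupied spots, the car with preference `p` and length `l` parks in spots
`j, j+1, …, j+l-1` for the least `j ≥ p` such that these spots all exist (are `≤ m`)
and are unoccupied; returns the new set of occupied spots, or `none` if parking fails. -/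
noncomputable def parkOne (m : ℕ) (occ : Finset ℕ) (p l : ℕ) : Option (Finset ℕ) :=
  if h : ∃ j, p ≤ j ∧ j + l ≤ m + 1 ∧ ∀ k ∈ Finset.Ico j (j + l), k ∉ occ then
    some (occ ∪ Finset.Ico (Nat.find h) (Nat.find h + l))
  else none

/-- Run the parking-assortment process for the cars `(preference, length)` in order. -/
noncomputable def parkList (m : ℕ) : List (ℕ × ℕ) → Finset ℕ → Option (Finset ℕ)
  | [], occ => some occ
  | c :: rest, occ => (parkOne m occ c.1 c.2).bind (parkList m rest)

/-- `x` is a parking assortment for the list of car lengths `y`. -/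
def IsPA (y x : List ℕ) : Prop :=
  x.length = y.length ∧ (∀ a ∈ x, 1 ≤ a ∧ a ≤ y.sum) ∧
    (parkList y.sum (x.zip y) ∅).isSome

/-- `PA y` is the set of parking assortments for `y`. -/
def PA (y : List ℕ) : Set (List ℕ) := {x | IsPA y x}

/-- `PAinv y` is the set of (permutation-)invariant parking assortments for `y`:
those preference lists all of whose rearrangements are parking assortments for `y`. -/
def PAinv (y : List ℕ) : Set (List ℕ) := {x | ∀ x', x'.Perm x → IsPA y x'}

/-- `y` is minimally invariant if the all-ones list is the only invariant
parking assortment for `y`. -/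
def MinInv (y : List ℕ) : Prop := PAinv y = {List.replicate y.length 1}

/-!
Put a car whose preference `a` satisfies `1 < a ≤ k` first. On the empty street it parks in
spots `a, …, a + y₁ - 1`. Every later car has length at least `k ≥ a`, while the free spots
`1, …, a - 1` below the first car form a gap of only `a - 1` spots, so no car ever parks
there. Hence all cars fit into `a, …, m`, fewer than the `m` spots their lengths add up to.
-/

open Finset

lemma parkOne_eq_some {m p l : ℕ} {occ occ' : Finset ℕ} (h : parkOne m occ p l = some occ') :
    ∃ j, p ≤ j ∧ j + l ≤ m + 1 ∧ Disjoint occ (Ico j (j + l)) ∧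
      occ' = occ ∪ Ico j (j + l) := by
  unfold parkOne at h
  split at h
  case isFalse => simp at h
  case isTrue hex =>
    obtain ⟨hpj, hjm, hfree⟩ := Nat.find_spec hex
    exact ⟨_, hpj, hjm, disjoint_right.mpr hfree, (Option.some.inj h).symm⟩

lemma parkOne_empty_eq_some {m p l : ℕ} {occ' : Finset ℕ} (h : parkOne m ∅ p l = some occ') :
    p + l ≤ m + 1 ∧ occ' = Ico p (p + l) := by
  unfold parkOne at h
  split at h
  case isFalse => simp at h
  case isTrue hex =>
    have hp : p + l ≤ m + 1 := by
      obtain ⟨hpj, hjm, -⟩ := Nat.find_spec hex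
      omega
    have hfind : Nat.find hex = p :=
      le_antisymm (Nat.find_le ⟨le_rfl, hp, by simp⟩) (Nat.find_spec hex).1
    rw [hfind, empty_union] at h
    exact ⟨hp, (Option.some.inj h).symm⟩

lemma parkList_cons_eq_some {m : ℕ} {c : ℕ × ℕ} {cs : List (ℕ × ℕ)} {occ occ' : Finset ℕ}
    (h : parkList m (c :: cs) occ = some occ') :
    ∃ occ₁, parkOne m occ c.1 c.2 = some occ₁ ∧ parkList m cs occ₁ = some occ' :=
  Option.bind_eq_some_iff.mp h

lemma card_of_parkList_eq_some {m : ℕ} :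
    ∀ {cs : List (ℕ × ℕ)} {occ occ' : Finset ℕ}, parkList m cs occ = some occ' →
      occ'.card = occ.card + (cs.map Prod.snd).sum
  | [], occ, occ', h => by
    simp only [parkList, Option.some.injEq] at h
    simp [h]
  | c :: cs, occ, occ', h => by
    obtain ⟨occ₁, h₁, hrest⟩ := parkList_cons_eq_some h
    obtain ⟨j, -, -, hdisj, rfl⟩ := parkOne_eq_some h₁
    rw [card_of_parkList_eq_some hrest, card_union_of_disjoint hdisj, Nat.card_Ico,
      List.map_cons, List.sum_cons]
    omega

/-- A free block of at least `a` spots that ends below the occupied spot `a` would have to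
contain spot `0`. -/
lemma subset_of_parkList_eq_some {m a : ℕ} :
    ∀ {cs : List (ℕ × ℕ)} {occ occ' : Finset ℕ}, (∀ c ∈ cs, 1 ≤ c.1 ∧ a ≤ c.2) →
      a ∈ occ → parkList m cs occ = some occ' → occ' ⊆ occ ∪ Ico a (m + 1)
  | [], occ, occ', _, _, h => by
    simp only [parkList, Option.some.injEq] at h
    simp [h]
  | c :: cs, occ, occ', hcs, ha, h => by
    obtain ⟨occ₁, h₁, hrest⟩ := parkList_cons_eq_some h
    obtain ⟨j, hpj, hjm, hdisj, rfl⟩ := parkOne_eq_some h₁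
    obtain ⟨hp, hl⟩ := hcs c List.mem_cons_self
    have haj : a ≤ j := by
      by_contra! hja
      exact disjoint_left.mp hdisj ha (mem_Ico.mpr ⟨hja.le, by omega⟩)
    have hblock : Ico j (j + c.2) ⊆ Ico a (m + 1) := Ico_subset_Ico haj hjm
    calc occ' ⊆ (occ ∪ Ico j (j + c.2)) ∪ Ico a (m + 1) :=
          subset_of_parkList_eq_some (fun c hc => hcs c (List.mem_cons_of_mem _ hc))
            (mem_union_left _ ha) hrest
      _ ⊆ occ ∪ Ico a (m + 1) := by
          rw [union_assoc, union_eq_right.mpr hblock]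

theorem stmt2_general (y x : List ℕ)
    (k : ℕ) (hkmin : ∀ a ∈ y, k ≤ a)
    (h : ∃ a ∈ x, 1 < a ∧ a ≤ k) :
    x ∉ PAinv y := by
  obtain ⟨a, hax, ha1, hak⟩ := h
  intro hinv
  obtain ⟨hlen, hbound, hsome⟩ := hinv (a :: x.erase a) (List.perm_cons_erase hax).symm
  obtain ⟨occ', hocc'⟩ := Option.isSome_iff_exists.mp hsome
  have hcard : occ'.card = y.sum := by
    rw [card_of_parkList_eq_some hocc', List.map_snd_zip hlen.ge, card_empty, zero_add]
  obtain _ | ⟨b, ys⟩ := y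
  · simp at hlen
  obtain ⟨occ₁, h₁, hrest⟩ := parkList_cons_eq_some hocc'
  obtain ⟨hfit, rfl⟩ := parkOne_empty_eq_some h₁
  have hcars : ∀ c ∈ (x.erase a).zip ys, 1 ≤ c.1 ∧ a ≤ c.2 := fun c hc =>
    ⟨(hbound c.1 (List.mem_cons_of_mem _ (List.of_mem_zip hc).1)).1,
      hak.trans (hkmin c.2 (List.mem_cons_of_mem _ (List.of_mem_zip hc).2))⟩
  have hab : a < a + b := by have := hkmin b List.mem_cons_self; omega
  have hsub : occ' ⊆ Ico a ((b :: ys).sum + 1) := by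
    have := subset_of_parkList_eq_some hcars (mem_Ico.mpr ⟨le_rfl, hab⟩) hrest
    rwa [union_eq_right.mpr (Ico_subset_Ico le_rfl hfit)] at this
  have := card_le_card hsub
  rw [hcard, Nat.card_Ico] at this
  omega

theorem stmt2 (y x : List ℕ) (hy : ∀ a ∈ y, 0 < a)
    (hlen : x.length = y.length)
    (k : ℕ) (hkmem : k ∈ y) (hkmin : ∀ a ∈ y, k ≤ a)
    (h : ∃ a ∈ x, 1 < a ∧ a ≤ k) :
    x ∉ PAinv y :=
  stmt2_general y x k hkmin h
end

section
/- Let c and n be positive integers, y = (c,c,…,c) ∈ ℕ^n the constant list, and x = (x_1,…,x_n) with each x_i ∈ {1,…,cn}. Then x is an invariant parking assortment for y if and only if both of the following hold: (1) x_i ≡ 1 (mod c) for all i ∈ {1,…,n}, and (2) for every j ∈ {1,…,n}, the number of indices i ∈ {1,…,n} with x_i ≤ c·j is at least j. -/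
/-!
If every preference is `≡ 1 (mod c)`, the street of length `c * n` splits into `n` aligned blocks
of `c` spots, every car occupies exactly one whole block, and parking becomes the classical
parking process of unit cars on the `n` blocks; there all cars park iff for every `j` at most
`n - j` preferences point at block `j` or later, which does not depend on the order of the cars.
If some preference `a` is not `≡ 1 (mod c)`, let that car go first: it occupies `[a, a + c)`, and
every later car fits entirely into `[1, a)` or `[a + c, c * n]`. Neither gap has length divisible
by `c` and their lengths add up to `c * (n - 1)`, so together they hold at most `n - 2` cars.
-/

open Finset

def Fits (m : ℕ) (occ : Finset ℕ) (l j : ℕ) : Prop :=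
  j + l ≤ m + 1 ∧ ∀ k ∈ Ico j (j + l), k ∉ occ

theorem parkOne_eq_some_iff {m p l : ℕ} {occ occ' : Finset ℕ} :
    parkOne m occ p l = some occ' ↔
      ∃ j, IsLeast {j | p ≤ j ∧ Fits m occ l j} j ∧ occ ∪ Ico j (j + l) = occ' := by
  unfold parkOne
  split_ifs with h
  · have hleast : IsLeast {j | p ≤ j ∧ Fits m occ l j} (Nat.find h) :=
      ⟨Nat.find_spec h, fun j hj => Nat.find_min' h hj⟩
    refine ⟨fun h' => ⟨_, hleast, Option.some.inj h'⟩, ?_⟩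
    rintro ⟨j, hj, rfl⟩
    rw [hleast.unique hj]
  · simp only [false_iff]
    rintro ⟨j, hj, -⟩
    exact h ⟨j, hj.1⟩

theorem parkOne_eq_none_iff {m p l : ℕ} {occ : Finset ℕ} :
    parkOne m occ p l = none ↔ ∀ j, p ≤ j → ¬Fits m occ l j := by
  unfold parkOne
  split_ifs with h
  · simp only [false_iff, not_forall, not_not]
    exact ⟨Nat.find h, (Nat.find_spec h).1, (Nat.find_spec h).2⟩
  · push Not at h
    simpa [Fits, and_assoc] using h

theorem zip_replicate_eq_map {α β : Type*} {x : List α} {n : ℕ} (hx : x.length = n) (b : β) :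
    x.zip (List.replicate n b) = x.map (·, b) := by
  subst hx
  induction x with
  | nil => rfl
  | cons a x ih => simp [List.replicate_succ, ih]

open Classical in
noncomputable def unitParkOne (n : ℕ) (S : Finset ℕ) (k : ℕ) : Option (Finset ℕ) :=
  if h : ∃ t, k ≤ t ∧ t < n ∧ t ∉ S then some (insert (Nat.find h) S) else none

noncomputable def unitParkList (n : ℕ) : List ℕ → Finset ℕ → Option (Finset ℕ)
  | [], S => some S
  | k :: l, S => (unitParkOne n S k).bind (unitParkList n l)

theorem unitParkOne_eq_some_iff {n k : ℕ} {S S' : Finset ℕ} :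
    unitParkOne n S k = some S' ↔
      ∃ t, IsLeast {t | k ≤ t ∧ t < n ∧ t ∉ S} t ∧ insert t S = S' := by
  unfold unitParkOne
  split_ifs with h
  · have hleast : IsLeast {t | k ≤ t ∧ t < n ∧ t ∉ S} (Nat.find h) :=
      ⟨Nat.find_spec h, fun t ht => Nat.find_min' h ht⟩
    refine ⟨fun h' => ⟨_, hleast, Option.some.inj h'⟩, ?_⟩
    rintro ⟨t, ht, rfl⟩
    rw [hleast.unique ht]
  · simp only [false_iff]
    rintro ⟨t, ht, -⟩
    exact h ⟨t, ht.1⟩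

theorem unitParkOne_eq_none_iff {n k : ℕ} {S : Finset ℕ} :
    unitParkOne n S k = none ↔ ∀ t, k ≤ t → t < n → t ∈ S := by
  unfold unitParkOne
  split_ifs with h
  · simp only [false_iff, not_forall, exists_prop]
    exact ⟨Nat.find h, (Nat.find_spec h).1, (Nat.find_spec h).2⟩
  · push Not at h
    simpa using h

theorem Ico_sdiff_eq_of_forall_mem {i j n : ℕ} {S : Finset ℕ} (hij : i ≤ j)
    (h : ∀ s, i ≤ s → s < j → s ∈ S) : Ico i n \ S = Ico j n \ S := by
  ext s
  simp only [mem_sdiff, mem_Ico]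
  constructor
  · rintro ⟨⟨his, hsn⟩, hsS⟩
    exact ⟨⟨not_lt.1 fun hsj => hsS (h s his hsj), hsn⟩, hsS⟩
  · rintro ⟨⟨hjs, hsn⟩, hsS⟩
    exact ⟨⟨hij.trans hjs, hsn⟩, hsS⟩

theorem forall_countP_le_card_insert_iff {n k t : ℕ} {S : Finset ℕ} {l : List ℕ}
    (ht : IsLeast {t | k ≤ t ∧ t < n ∧ t ∉ S} t) :
    (∀ j ≤ n, l.countP (j ≤ ·) ≤ #(Ico j n \ insert t S)) ↔
      ∀ j ≤ n, (k :: l).countP (j ≤ ·) ≤ #(Ico j n \ S) := by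
  obtain ⟨⟨hkt, htn, htS⟩, hleast⟩ := ht
  have hcard {j} (hjt : j ≤ t) : #(Ico j n \ insert t S) + 1 = #(Ico j n \ S) := by
    rw [sdiff_insert]
    exact card_erase_add_one (by simp [hjt, htn, htS])
  constructor
  · intro H j hj
    rw [List.countP_cons]
    by_cases hjk : j ≤ k
    · have := hcard (hjk.trans hkt)
      simp only [hjk, decide_true, if_true]
      linarith [H j hj]
    · simp only [hjk, decide_false, if_false, Bool.false_eq_true, add_zero]
      exact (H j hj).trans (card_le_card (sdiff_subset_sdiff le_rfl (subset_insert _ _)))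
  · intro H j hj
    by_cases hjt : j ≤ t
    · -- the spots in `[min j k, j)` are taken, since `t` is the first free spot after `k`
      have hfree : Ico (min j k) n \ S = Ico j n \ S :=
        Ico_sdiff_eq_of_forall_mem (min_le_left _ _) fun s hs hsj =>
          not_not.1 fun hsS => by
            have := hleast ⟨by omega, by omega, hsS⟩
            omega
      have hmono : l.countP (j ≤ ·) ≤ l.countP (min j k ≤ ·) :=
        List.countP_mono_left fun s _ hs => by simp at hs ⊢; omega
      have hcount : (k :: l).countP (min j k ≤ ·) = l.countP (min j k ≤ ·) + 1 := by simp
      have := H (min j k) (by omega)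
      rw [hcount, hfree] at this
      have := hcard hjt
      omega
    · have hsame : Ico j n \ insert t S = Ico j n \ S := by
        rw [sdiff_insert, erase_eq_of_notMem (by simp; omega)]
      rw [hsame]
      exact (List.sublist_cons_self k l).countP_le.trans (H j hj)

theorem unitParkList_isSome_iff (n : ℕ) : ∀ (l : List ℕ) (S : Finset ℕ),
    (unitParkList n l S).isSome ↔ ∀ j ≤ n, l.countP (j ≤ ·) ≤ #(Ico j n \ S)
  | [], S => by simp [unitParkList]
  | k :: l, S => by
    rw [unitParkList]
    cases h : unitParkOne n S k with
    | none =>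
      have hfull : Ico (min k n) n \ S = ∅ := by
        ext s
        simp only [mem_sdiff, mem_Ico, notMem_empty, iff_false, not_and, not_not]
        exact fun hs => unitParkOne_eq_none_iff.1 h s (by omega) hs.2
      simp only [Option.bind_none, Option.isSome_none, Bool.false_eq_true, false_iff,
        not_forall, not_le]
      exact ⟨min k n, min_le_right _ _, by simp [hfull]⟩
    | some S' =>
      obtain ⟨t, ht, rfl⟩ := unitParkOne_eq_some_iff.1 h
      rw [Option.bind_some, unitParkList_isSome_iff n l, forall_countP_le_card_insert_iff ht]

theorem countP_ge_add_countP_lt (l : List ℕ) (j : ℕ) :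
    l.countP (j ≤ ·) + l.countP (· < j) = l.length := by
  rw [List.length_eq_countP_add_countP (j ≤ ·)]
  congr 1
  exact List.countP_congr fun a _ => by simp

theorem unitParkList_empty_isSome_iff {n : ℕ} {l : List ℕ} (hl : l.length = n) :
    (unitParkList n l ∅).isSome ↔ ∀ j ≤ n, j ≤ l.countP (· < j) := by
  rw [unitParkList_isSome_iff]
  refine forall₂_congr fun j _ => ?_
  rw [sdiff_empty, Nat.card_Ico]
  have := countP_ge_add_countP_lt l j
  omega

/-- Block `t` of the street consists of the spots `c * t + 1, …, c * t + c`; spot `t` of the unit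
model stands for block `t`. -/
def occSet (c : ℕ) (S : Finset ℕ) : Finset ℕ :=
  S.biUnion fun t => Ico (c * t + 1) (c * t + 1 + c)

section Blocks

variable {c n : ℕ} (hc : 0 < c)
include hc

theorem mem_Ico_block_iff {s t : ℕ} :
    s ∈ Ico (c * t + 1) (c * t + 1 + c) ↔ 1 ≤ s ∧ (s - 1) / c = t := by
  rw [mem_Ico, Nat.div_eq_iff hc, mul_comm t c]
  omega

theorem mem_occSet {S : Finset ℕ} {s : ℕ} : s ∈ occSet c S ↔ 1 ≤ s ∧ (s - 1) / c ∈ S := by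
  simp only [occSet, mem_biUnion, mem_Ico_block_iff hc]
  constructor
  · rintro ⟨t, htS, hs, rfl⟩
    exact ⟨hs, htS⟩
  · rintro ⟨hs, hS⟩
    exact ⟨_, hS, hs, rfl⟩

theorem fits_block {S : Finset ℕ} {t : ℕ} (htn : t < n) (htS : t ∉ S) :
    Fits (c * n) (occSet c S) c (c * t + 1) := by
  refine ⟨?_, fun s hs hsS => ?_⟩
  · have := Nat.mul_le_mul_left c (Nat.succ_le_of_lt htn)
    rw [Nat.mul_succ] at this
    omega
  · obtain ⟨-, rfl⟩ := (mem_Ico_block_iff hc).1 hs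
    exact htS ((mem_occSet hc).1 hsS).2

/-- A free run of `c` spots starting at `j` contains the last spot of block `(j - 1) / c`,
so that block is free. -/
theorem block_free_of_fits {S : Finset ℕ} {j : ℕ} (hj : 1 ≤ j)
    (h : Fits (c * n) (occSet c S) c j) :
    c * ((j - 1) / c) + 1 ≤ j ∧ (j - 1) / c < n ∧ (j - 1) / c ∉ S := by
  obtain ⟨hjn, hfree⟩ := h
  have hdiv := Nat.div_add_mod (j - 1) c
  have hmod := Nat.mod_lt (j - 1) hc
  set t := (j - 1) / c
  have hlast : c * t + c ∈ Ico (c * t + 1) (c * t + 1 + c) := mem_Ico.2 ⟨by omega, by omega⟩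
  refine ⟨by omega, ?_, fun htS => hfree (c * t + c) (mem_Ico.2 ⟨by omega, by omega⟩) ?_⟩
  · have : c * (t + 1) ≤ c * n := by rw [Nat.mul_succ]; omega
    exact Nat.lt_of_succ_le (Nat.le_of_mul_le_mul_left this hc)
  · rw [mem_occSet hc, ((mem_Ico_block_iff hc).1 hlast).2]
    exact ⟨by omega, htS⟩

theorem parkOne_occSet (S : Finset ℕ) (k : ℕ) :
    parkOne (c * n) (occSet c S) (c * k + 1) c = (unitParkOne n S k).map (occSet c) := by
  cases h : unitParkOne n S k with
  | none =>
    refine parkOne_eq_none_iff.2 fun j hkj hfits => ?_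
    obtain ⟨-, htn, htS⟩ := block_free_of_fits hc (by omega) hfits
    refine htS (unitParkOne_eq_none_iff.1 h _ ?_ htn)
    rw [Nat.le_div_iff_mul_le hc, mul_comm]
    omega
  | some S' =>
    obtain ⟨t, ⟨⟨hkt, htn, htS⟩, hleast⟩, rfl⟩ := unitParkOne_eq_some_iff.1 h
    refine parkOne_eq_some_iff.2 ⟨c * t + 1, ⟨⟨?_, fits_block hc htn htS⟩, ?_⟩, ?_⟩
    · have := Nat.mul_le_mul_left c hkt
      omega
    · rintro j ⟨hkj, hfits⟩
      obtain ⟨hle, htn', htS'⟩ := block_free_of_fits hc (by omega) hfits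
      have hkt' : k ≤ (j - 1) / c := by
        rw [Nat.le_div_iff_mul_le hc, mul_comm]
        omega
      have := Nat.mul_le_mul_left c (hleast ⟨hkt', htn', htS'⟩)
      omega
    · rw [occSet, occSet, biUnion_insert, union_comm]

theorem parkList_occSet : ∀ (l : List ℕ) (S : Finset ℕ),
    parkList (c * n) (l.map fun k => (c * k + 1, c)) (occSet c S) =
      (unitParkList n l S).map (occSet c)
  | [], S => rfl
  | k :: l, S => by
    rw [List.map_cons, parkList, unitParkList, parkOne_occSet hc, Option.bind_map,
      Option.map_bind]
    congr 1
    funext S'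
    exact parkList_occSet l S'

end Blocks

theorem isPA_replicate_map_iff {c n : ℕ} (hc : 0 < c) {l : List ℕ} (hl : l.length = n) :
    IsPA (List.replicate n c) (l.map fun k => c * k + 1) ↔ ∀ j ≤ n, j ≤ l.countP (· < j) := by
  have hsum : (List.replicate n c).sum = c * n := by
    rw [List.sum_replicate, smul_eq_mul, mul_comm]
  have hpark :
      (parkList (c * n) ((l.map fun k => c * k + 1).zip (List.replicate n c)) ∅).isSome ↔
        ∀ j ≤ n, j ≤ l.countP (· < j) := by
    rw [zip_replicate_eq_map (by rw [List.length_map, hl]), List.map_map,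
      ← unitParkList_empty_isSome_iff hl,
      ← Option.isSome_map (f := occSet c) (x := unitParkList n l ∅), ← parkList_occSet hc,
      occSet, biUnion_empty]
    rfl
  refine ⟨fun ⟨_, _, h⟩ => hpark.1 (hsum ▸ h), fun h => ⟨by simp [hl], ?_, hsum ▸ hpark.2 h⟩⟩
  have hlt : ∀ k ∈ l, k < n := by
    have := (h n le_rfl).antisymm (hl ▸ List.countP_le_length)
    simpa using List.countP_eq_length.1 (this.symm.trans hl.symm)
  intro a ha
  obtain ⟨k, hk, rfl⟩ := List.mem_map.1 ha
  have : c * k + c ≤ c * n := mul_add_one c k ▸ Nat.mul_le_mul_left c (hlt k hk)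
  rw [hsum]
  omega

theorem isPA_replicate_iff {c n : ℕ} (hc : 0 < c) {x : List ℕ} (hlen : x.length = n)
    (hx : ∀ a ∈ x, 1 ≤ a ∧ a ≡ 1 [MOD c]) :
    IsPA (List.replicate n c) x ↔
      ∀ j, 1 ≤ j → j ≤ n → j ≤ x.countP (fun a => decide (a ≤ c * j)) := by
  set l := x.map fun a => (a - 1) / c
  have hx_eq : l.map (fun k => c * k + 1) = x := by
    rw [List.map_map]
    refine (List.map_congr_left fun a ha => ?_).trans (List.map_id' x)
    obtain ⟨ha1, hmod⟩ := hx a ha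
    have := Nat.mul_div_cancel' ((Nat.modEq_iff_dvd' ha1).1 hmod.symm)
    simp only [Function.comp_apply]
    omega
  have hcount (j : ℕ) : x.countP (fun a => decide (a ≤ c * j)) = l.countP (· < j) := by
    rw [← hx_eq, List.countP_map]
    refine List.countP_congr fun k _ => ?_
    simp only [Function.comp_apply, decide_eq_true_eq, ← Nat.lt_iff_add_one_le]
    exact Nat.mul_lt_mul_left hc
  conv_lhs => rw [← hx_eq]
  rw [isPA_replicate_map_iff hc (by rw [List.length_map, hlen])]
  simp only [hcount]
  constructor
  · exact fun h j _ hj => h j hj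
  · intro h j hj
    rcases j.eq_zero_or_pos with rfl | hj0
    · exact Nat.zero_le _
    · exact h j hj0 hj

theorem Ico_subset_or_subset_of_disjoint {a c j m : ℕ} (hc : 0 < c) (hj : 1 ≤ j)
    (hjm : j + c ≤ m + 1) (hd : Disjoint (Ico j (j + c)) (Ico a (a + c))) :
    Ico j (j + c) ⊆ Ico 1 a ∨ Ico j (j + c) ⊆ Ico (a + c) (m + 1) := by
  have : j + c ≤ a ∨ a + c ≤ j := by
    by_contra! h
    exact disjoint_left.1 hd (show max j a ∈ Ico j (j + c) from mem_Ico.2 ⟨by omega, by omega⟩)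
      (mem_Ico.2 ⟨by omega, by omega⟩)
  rcases this with h | h
  · exact Or.inl (Ico_subset_Ico hj h)
  · exact Or.inr (Ico_subset_Ico h hjm)

theorem card_sdiff_union_div_add_one {c : ℕ} (hc : 0 < c) {G occ B : Finset ℕ}
    (hB : B ⊆ G \ occ) (hcard : #B = c) : #(G \ (occ ∪ B)) / c + 1 = #(G \ occ) / c := by
  have hsplit : G \ (occ ∪ B) = (G \ occ) \ B := sdiff_sdiff_left.symm
  rw [hsplit, card_sdiff_of_subset hB, hcard, ← Nat.add_div_right _ hc,
    Nat.sub_add_cancel (hcard ▸ card_le_card hB)]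

theorem card_sdiff_union_div_le (c : ℕ) (G occ B : Finset ℕ) :
    #(G \ (occ ∪ B)) / c ≤ #(G \ occ) / c :=
  Nat.div_le_div_right (card_le_card (sdiff_subset_sdiff subset_rfl subset_union_left))

/-- Once `[a, a + c)` is occupied, each further car of length `c` lies inside `[1, a)` or inside
`[a + c, m]`, so this bounds the number of cars that can still park. -/
def gapBound (m c a : ℕ) (occ : Finset ℕ) : ℕ :=
  #(Ico 1 a \ occ) / c + #(Ico (a + c) (m + 1) \ occ) / c

theorem gapBound_add_one_le_of_parkOne {m c a p : ℕ} (hc : 0 < c) {occ occ₁ : Finset ℕ}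
    (hp : 1 ≤ p) (ha : Ico a (a + c) ⊆ occ) (h : parkOne m occ p c = some occ₁) :
    gapBound m c a occ₁ + 1 ≤ gapBound m c a occ := by
  obtain ⟨j, ⟨⟨hpj, hjm, hfree⟩, -⟩, rfl⟩ := parkOne_eq_some_iff.1 h
  have hdisj : Disjoint (Ico j (j + c)) occ := disjoint_left.2 hfree
  have hcard : #(Ico j (j + c)) = c := by simp
  unfold gapBound
  rcases Ico_subset_or_subset_of_disjoint hc (by omega) hjm (hdisj.mono_right ha) with hL | hR
  · have := card_sdiff_union_div_add_one hc (subset_sdiff.2 ⟨hL, hdisj⟩) hcard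
    have := card_sdiff_union_div_le c (Ico (a + c) (m + 1)) occ (Ico j (j + c))
    omega
  · have := card_sdiff_union_div_add_one hc (subset_sdiff.2 ⟨hR, hdisj⟩) hcard
    have := card_sdiff_union_div_le c (Ico 1 a) occ (Ico j (j + c))
    omega

theorem length_le_gapBound {m c a : ℕ} (hc : 0 < c) : ∀ (l : List ℕ) (occ occ' : Finset ℕ),
    (∀ p ∈ l, 1 ≤ p) → Ico a (a + c) ⊆ occ → parkList m (l.map (·, c)) occ = some occ' →
      l.length ≤ gapBound m c a occ
  | [], _, _, _, _, _ => Nat.zero_le _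
  | p :: l, occ, occ', hl, ha, h => by
    rw [List.map_cons, parkList, Option.bind_eq_some_iff] at h
    obtain ⟨occ₁, h₁, hrest⟩ := h
    have hstep := gapBound_add_one_le_of_parkOne hc (hl p List.mem_cons_self) ha h₁
    obtain ⟨j, -, rfl⟩ := parkOne_eq_some_iff.1 h₁
    have := length_le_gapBound hc l _ occ' (fun q hq => hl q (List.mem_cons_of_mem p hq))
      (ha.trans subset_union_left) hrest
    rw [List.length_cons]
    omega

theorem modEq_one_of_le_div_add_div {a c n : ℕ} (ha : 1 ≤ a)
    (hfit : a + c ≤ c * n + 1) (h : n - 1 ≤ (a - 1) / c + (c * n + 1 - (a + c)) / c) :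
    a ≡ 1 [MOD c] := by
  set X := a - 1
  set Y := c * n + 1 - (a + c)
  have hXY : X + Y = c * (n - 1) := by
    rw [Nat.mul_sub_one]
    omega
  have hX := Nat.div_add_mod X c
  have hY := Nat.div_add_mod Y c
  have hr : X % c = 0 := by
    by_contra hr
    have : c * (X / c + Y / c) < c * (n - 1) := by
      rw [mul_add]
      omega
    have := Nat.lt_of_mul_lt_mul_left this
    omega
  exact ((Nat.modEq_iff_dvd' ha).2 (Nat.dvd_of_mod_eq_zero hr)).symm

theorem modEq_one_of_isPA_cons {a c n : ℕ} (hc : 0 < c) {rest : List ℕ}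
    (h : IsPA (List.replicate n c) (a :: rest)) : a ≡ 1 [MOD c] := by
  obtain ⟨hlen, hbd, hpark⟩ := h
  have hsum : (List.replicate n c).sum = c * n := by
    rw [List.sum_replicate, smul_eq_mul, mul_comm]
  rw [List.length_cons, List.length_replicate] at hlen
  subst hlen
  rw [hsum, List.replicate_succ, List.zip_cons_cons, zip_replicate_eq_map rfl, parkList,
    Option.isSome_iff_exists] at hpark
  obtain ⟨occ', h'⟩ := hpark
  obtain ⟨occ₁, h₁, hrest⟩ := Option.bind_eq_some_iff.1 h'
  obtain ⟨j, ⟨⟨haj, hjm, -⟩, hmin⟩, rfl⟩ := parkOne_eq_some_iff.1 h₁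
  obtain rfl : j = a := le_antisymm (hmin ⟨le_rfl, by omega, by simp⟩) haj
  have hbound := length_le_gapBound hc rest _ _
    (fun p hp => (hbd p (List.mem_cons_of_mem _ hp)).1) subset_union_right hrest
  simp only [gapBound, empty_union, Nat.card_Ico,
    sdiff_eq_self_of_disjoint (Ico_disjoint_Ico_consecutive _ _ _),
    sdiff_eq_self_of_disjoint (Ico_disjoint_Ico_consecutive _ _ _).symm] at hbound
  exact modEq_one_of_le_div_add_div (hbd j List.mem_cons_self).1 hjm (by omega)

theorem stmt3_general (c n : ℕ) (hc : 0 < c)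
    (x : List ℕ) (hlen : x.length = n)
    (hx : ∀ a ∈ x, 1 ≤ a ∧ a ≤ c * n) :
    x ∈ PAinv (List.replicate n c) ↔
      (∀ a ∈ x, a % c = 1 % c) ∧
      (∀ j, 1 ≤ j → j ≤ n → j ≤ x.countP (fun a => decide (a ≤ c * j))) := by
  constructor
  · intro hinv
    have hmod : ∀ a ∈ x, a % c = 1 % c := fun a ha =>
      modEq_one_of_isPA_cons hc (hinv _ (List.perm_cons_erase ha).symm)
    exact ⟨hmod, (isPA_replicate_iff hc hlen fun a ha => ⟨(hx a ha).1, hmod a ha⟩).1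
      (hinv x (List.Perm.refl x))⟩
  · rintro ⟨hmod, hcount⟩ x' hperm
    have hsub := hperm.subset
    rw [isPA_replicate_iff hc (hperm.length_eq.trans hlen)
      fun a ha => ⟨(hx a (hsub ha)).1, hmod a (hsub ha)⟩]
    simpa only [hperm.countP_eq] using hcount

theorem stmt3 (c n : ℕ) (hc : 0 < c) (hn : 0 < n)
    (x : List ℕ) (hlen : x.length = n)
    (hx : ∀ a ∈ x, 1 ≤ a ∧ a ≤ c * n) :
    x ∈ PAinv (List.replicate n c) ↔
      (∀ a ∈ x, a % c = 1 % c) ∧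
      (∀ j, 1 ≤ j → j ≤ n → j ≤ x.countP (fun a => decide (a ≤ c * j))) :=
  stmt3_general c n hc x hlen hx
end

section
/- Let y = (y_1, y_2) be a pair of positive integers. Then y is minimally invariant (i.e., PA^inv_2(y) = {(1,1)}) if and only if y_1 < y_2. -/
lemma parkOne_isSome_iff {m p l : ℕ} {occ : Finset ℕ} :
    (parkOne m occ p l).isSome ↔
      ∃ j, p ≤ j ∧ j + l ≤ m + 1 ∧ ∀ k ∈ Finset.Ico j (j + l), k ∉ occ := by
  unfold parkOne
  split <;> rename_i h <;> simp only [Option.isSome_some, Option.isSome_none,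
    Bool.false_eq_true, true_iff, false_iff]
  · exact h.imp fun j hj => ⟨hj.1, hj.2.1, hj.2.2⟩
  · exact h

lemma parkOne_empty {m p l : ℕ} (h : p + l ≤ m + 1) :
    parkOne m ∅ p l = some (Finset.Ico p (p + l)) := by
  have hex : ∃ j, p ≤ j ∧ j + l ≤ m + 1 ∧ ∀ k ∈ Finset.Ico j (j + l), k ∉ (∅ : Finset ℕ) :=
    ⟨p, le_refl _, h, by simp⟩
  unfold parkOne
  rw [dif_pos hex]
  have hfind : Nat.find hex = p :=
    le_antisymm (Nat.find_le ⟨le_refl _, h, by simp⟩) (Nat.find_spec hex).1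
  rw [hfind, Finset.empty_union]

lemma perm_pair {l : List ℕ} {a b : ℕ} (h : l.Perm [a, b]) :
    l = [a, b] ∨ l = [b, a] := by
  have hlen := h.length_eq
  match l with
  | [c, d] =>
    have hc : c = a ∨ c = b := by
      have : c ∈ [a, b] := h.mem_iff.mp (by simp)
      simpa using this
    rcases hc with rfl | rfl
    · left
      have : [d].Perm [b] := h.cons_inv
      simp [List.perm_singleton] at this
      simp [this]
    · right
      have hswap : ([a, c] : List ℕ).Perm [c, a] := List.Perm.swap _ _ _
      have : [d].Perm [a] := (h.trans hswap).cons_inv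
      simp [List.perm_singleton] at this
      simp [this]

/-- Key analysis: constraints on a parking assortment `[a, b]` for `[y1, y2]`. -/
lemma key {y1 y2 a b : ℕ} (h1 : 0 < y1) (h2 : 0 < y2)
    (h : IsPA [y1, y2] [a, b]) :
    1 ≤ a ∧ 1 ≤ b ∧ ((a = 1 ∧ b ≤ y1 + 1) ∨ (a = y2 + 1 ∧ b = 1)) := by
  obtain ⟨_, hbnd, hsome⟩ := h
  have ha := hbnd a (by simp)
  have hb := hbnd b (by simp)
  simp only [List.sum_cons, List.sum_nil, Nat.add_zero] at ha hb hsome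
  refine ⟨ha.1, hb.1, ?_⟩
  -- unfold the two-step parking process
  simp only [List.zip, List.zipWith, parkList] at hsome
  rcases hP : parkOne (y1 + y2) ∅ a y1 with _ | occ
  · rw [hP] at hsome; simp at hsome
  · have hPs : (parkOne (y1 + y2) ∅ a y1).isSome := by rw [hP]; rfl
    obtain ⟨j, hja, hjm, -⟩ := parkOne_isSome_iff.mp hPs
    have ha1 : a + y1 ≤ y1 + y2 + 1 := le_trans (by omega) hjm
    have hocc : occ = Finset.Ico a (a + y1) := by
      rw [parkOne_empty ha1] at hP
      exact (Option.some_inj.mp hP).symm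
    rw [hP] at hsome
    simp only [Option.bind_some, Option.bind_some] at hsome
    have hsome2 : (parkOne (y1 + y2) occ b y2).isSome := by
      rcases hQ : parkOne (y1 + y2) occ b y2 with _ | o2
      · rw [hQ] at hsome; simp at hsome
      · rfl
    obtain ⟨j2, hj2b, hj2m, hj2free⟩ := parkOne_isSome_iff.mp hsome2
    rw [hocc] at hj2free
    -- disjointness of intervals
    have hdisj : j2 + y2 ≤ a ∨ a + y1 ≤ j2 := by
      by_contra hcon
      push_neg at hcon
      obtain ⟨hc1, hc2⟩ := hcon
      have hk := hj2free (max a j2) (by simp [Finset.mem_Ico]; omega)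
      simp [Finset.mem_Ico] at hk
      omega
    omega

lemma isPA_of_park {y1 y2 a b : ℕ} (h1 : 0 < y1) (h2 : 0 < y2)
    (ha : 1 ≤ a) (ham : a ≤ y1 + y2) (hb : 1 ≤ b) (hbm : b ≤ y1 + y2)
    (ha1 : a + y1 ≤ y1 + y2 + 1)
    (hj : ∃ j, b ≤ j ∧ j + y2 ≤ y1 + y2 + 1 ∧
      ∀ k ∈ Finset.Ico j (j + y2), k ∉ Finset.Ico a (a + y1)) :
    IsPA [y1, y2] [a, b] := by
  refine ⟨rfl, ?_, ?_⟩
  · intro c hc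
    simp only [List.sum_cons, List.sum_nil, Nat.add_zero]
    simp at hc
    rcases hc with rfl | rfl
    · exact ⟨ha, ham⟩
    · exact ⟨hb, hbm⟩
  · simp only [List.sum_cons, List.sum_nil, Nat.add_zero, List.zip, List.zipWith, parkList]
    rw [parkOne_empty ha1]
    simp only [Option.bind_some]
    rcases hQ : parkOne (y1 + y2) (Finset.Ico a (a + y1)) b y2 with _ | o2
    · exfalso
      have : ¬ (parkOne (y1 + y2) (Finset.Ico a (a + y1)) b y2).isSome := by
        rw [hQ]; simp
      exact this (parkOne_isSome_iff.mpr hj)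
    · simp [parkList]

theorem stmt14 (y1 y2 : ℕ) (h1 : 0 < y1) (h2 : 0 < y2) :
    MinInv [y1, y2] ↔ y1 < y2 := by
  constructor
  · -- contrapositive: if y2 ≤ y1 then [1, y2+1] is invariant and ≠ [1,1]
    intro hmin
    by_contra hlt
    push_neg at hlt
    have hmem : ([1, y2 + 1] : List ℕ) ∈ PAinv [y1, y2] := by
      intro x' hx'
      rcases perm_pair hx' with rfl | rfl
      · exact isPA_of_park h1 h2 le_rfl (by omega) (by omega) (by omega) (by omega)
          ⟨y1 + 1, by omega, by omega, by intro k hk; simp [Finset.mem_Ico] at hk ⊢; omega⟩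
      · exact isPA_of_park h1 h2 (by omega) (by omega) le_rfl (by omega) (by omega)
          ⟨1, le_rfl, by omega, by intro k hk; simp [Finset.mem_Ico] at hk ⊢; omega⟩
    rw [hmin] at hmem
    simp [List.replicate] at hmem
    omega
  · intro hlt
    unfold MinInv
    ext x
    simp only [Set.mem_singleton_iff, List.length_cons, List.length_nil,
      List.replicate]
    constructor
    · intro hx
      have hself : IsPA [y1, y2] x := hx x (List.Perm.refl x)
      have hlen : x.length = 2 := hself.1
      match x, hlen with
      | [a, b], _ =>
        have hab := key h1 h2 (hx [a, b] (List.Perm.refl _))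
        have hba := key h1 h2 (hx [b, a] (List.Perm.swap _ _ _))
        have ha1 : a = 1 := by omega
        have hb1 : b = 1 := by omega
        simp [ha1, hb1]
    · intro hx
      subst hx
      intro x' hx'
      have : x' = [1, 1] := by
        rcases perm_pair (by simpa using hx') with h | h <;> simpa using h
      subst this
      exact isPA_of_park h1 h2 le_rfl (by omega) le_rfl (by omega) (by omega)
        ⟨y1 + 1, by omega, by omega, by intro k hk; simp [Finset.mem_Ico] at hk ⊢; omega⟩
end
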